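/- arXiv:2604.19795 — 2 statements merged into one kernel-verified Lean document; each statement's English description precedes it below -/
import Mathlib

section
/- Hedge (exponential weights) regret bound: for K experts, T rounds, rewards r_j^(t) ∈ [0,1], and weights updated by w_j^(t+1) = w_j^(t)·exp(η·r_j^(t)) with the learner sampling expert j with probability proportional to w_j^(t), the expected cumulative regret against the best fixed expert is at most √(2T·log K) for the choice η = √(2·log K / T). -/
/-!
The potential `Wₜ = ∑ⱼ wₜ(j)` grows by at most a factor `exp (η gₜ + η² / 2)` per round, where
`gₜ` is the learner's expected reward: by convexity of `exp` on `[-1, 1]`, each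
`exp (η (r - gₜ))` lies below the chord `cosh η + (r - gₜ) sinh η`, whose weighted mean is
`cosh η ≤ exp (η² / 2)`. Hence `exp (η Rⱼ) = w_T(j) ≤ W_T ≤ K exp (η G + T η² / 2)` for every
expert `j`, i.e. `Rⱼ - G ≤ log K / η + T η / 2`, which equals `√(2 T log K)` at the given `η`.
-/

open Real Finset

theorem exp_mul_le_cosh_add_mul_sinh (a : ℝ) {y : ℝ} (hy : y ∈ Set.Icc (-1 : ℝ) 1) :
    exp (a * y) ≤ cosh a + y * sinh a := by
  have h := convexOn_exp.2 (Set.mem_univ (-a)) (Set.mem_univ a)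
    (by linarith [hy.2] : (0 : ℝ) ≤ (1 - y) / 2) (by linarith [hy.1] : (0 : ℝ) ≤ (1 + y) / 2)
    (by ring)
  calc exp (a * y) = exp ((1 - y) / 2 * -a + (1 + y) / 2 * a) := by ring_nf
    _ ≤ (1 - y) / 2 * exp (-a) + (1 + y) / 2 * exp a := h
    _ = cosh a + y * sinh a := by rw [cosh_eq, sinh_eq]; ring

theorem sum_mul_exp_le_mul_exp_div {ι : Type*} {s : Finset ι} {w x : ι → ℝ}
    (hw : ∀ i ∈ s, 0 ≤ w i) (hW : 0 < ∑ i ∈ s, w i) (hx : ∀ i ∈ s, x i ∈ Set.Icc (0 : ℝ) 1)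
    (η : ℝ) :
    ∑ i ∈ s, w i * exp (η * x i) ≤
      (∑ i ∈ s, w i) * exp (η * ((∑ i ∈ s, w i * x i) / ∑ i ∈ s, w i) + η ^ 2 / 2) := by
  set W := ∑ i ∈ s, w i
  set m := (∑ i ∈ s, w i * x i) / W
  have hm : m ∈ Set.Icc (0 : ℝ) 1 := by
    simpa [m, centerMass, div_eq_inv_mul] using (convex_Icc (0 : ℝ) 1).centerMass_mem hw hW hx
  have hsum : ∑ i ∈ s, w i * (x i - m) = 0 := by
    have hWm : ∑ i ∈ s, w i * x i = W * m := (mul_div_cancel₀ _ hW.ne').symm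
    simp only [mul_sub, sum_sub_distrib, ← sum_mul, hWm]
    exact sub_self _
  calc ∑ i ∈ s, w i * exp (η * x i)
      = exp (η * m) * ∑ i ∈ s, w i * exp (η * (x i - m)) := by
        rw [mul_sum]
        refine sum_congr rfl fun i _ => ?_
        rw [mul_left_comm, ← exp_add]
        ring_nf
    _ ≤ exp (η * m) * ∑ i ∈ s, w i * (cosh η + (x i - m) * sinh η) := by
        gcongr with i hi
        · exact hw i hi
        · exact exp_mul_le_cosh_add_mul_sinh η
            ⟨by linarith [(hx i hi).1, hm.2], by linarith [(hx i hi).2, hm.1]⟩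
    _ = exp (η * m) * (W * cosh η) := by
        simp only [mul_add, sum_add_distrib, ← sum_mul, ← mul_assoc, hsum, zero_mul, add_zero, W]
    _ ≤ exp (η * m) * (W * exp (η ^ 2 / 2)) := by gcongr; exact cosh_le_exp_half_sq η
    _ = W * exp (η * m + η ^ 2 / 2) := by rw [exp_add]; ring

theorem le_mul_exp_sum_of_le_mul_exp {u a : ℕ → ℝ} (h : ∀ t, u (t + 1) ≤ u t * exp (a t))
    (n : ℕ) : u n ≤ u 0 * exp (∑ t ∈ range n, a t) := by
  induction n with
  | zero => simp
  | succ n ih =>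
    calc u (n + 1) ≤ u n * exp (a n) := h n
      _ ≤ u 0 * exp (∑ t ∈ range n, a t) * exp (a n) := by gcongr
      _ = u 0 * exp (∑ t ∈ range (n + 1), a t) := by rw [sum_range_succ, exp_add]; ring

theorem div_sqrt_add_mul_sqrt_div_two {L T : ℝ} (hL : 0 < L) (hT : 0 < T) :
    L / √(2 * L / T) + T * √(2 * L / T) / 2 = √(2 * T * L) := by
  set η := √(2 * L / T)
  have hη : 0 < η := sqrt_pos.2 (by positivity)
  have hL_eq : L = T * η ^ 2 / 2 := by
    rw [sq_sqrt (by positivity)]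
    field_simp
  rw [eq_comm, sqrt_eq_iff_mul_self_eq_of_pos (by positivity), hL_eq]
  field_simp
  ring

section Hedge

variable {ι : Type*} {η : ℝ} {r w : ℕ → ι → ℝ}

theorem hedge_weight_eq (hw0 : ∀ j, w 0 j = 1)
    (hwrec : ∀ t j, w (t + 1) j = w t j * exp (η * r t j)) (n : ℕ) (j : ι) :
    w n j = exp (η * ∑ t ∈ range n, r t j) := by
  induction n with
  | zero => simp [hw0]
  | succ n ih => rw [hwrec, ih, ← exp_add, sum_range_succ, mul_add]

theorem hedge_potential_le [Fintype ι] [Nonempty ι] (hr : ∀ t j, r t j ∈ Set.Icc (0 : ℝ) 1)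
    (hw0 : ∀ j, w 0 j = 1) (hwrec : ∀ t j, w (t + 1) j = w t j * exp (η * r t j)) (n : ℕ) :
    ∑ j, w n j ≤ Fintype.card ι *
      exp (η * ∑ t ∈ range n, (∑ j, w t j * r t j) / (∑ j, w t j) + n * η ^ 2 / 2) := by
  have hpos t j : 0 < w t j := by rw [hedge_weight_eq hw0 hwrec]; exact exp_pos _
  have hstep t : ∑ j, w (t + 1) j ≤
      (∑ j, w t j) * exp (η * ((∑ j, w t j * r t j) / ∑ j, w t j) + η ^ 2 / 2) := by
    simp only [hwrec]
    exact sum_mul_exp_le_mul_exp_div (fun j _ => (hpos t j).le)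
      (sum_pos (fun j _ => hpos t j) univ_nonempty) (fun j _ => hr t j) η
  calc ∑ j, w n j ≤ (∑ j, w 0 j) * exp (∑ t ∈ range n,
        (η * ((∑ j, w t j * r t j) / ∑ j, w t j) + η ^ 2 / 2)) :=
        le_mul_exp_sum_of_le_mul_exp (u := fun t => ∑ j, w t j) hstep n
    _ = _ := by
        simp only [hw0, sum_const, card_univ, nsmul_eq_mul, mul_one, sum_add_distrib, mul_sum,
          card_range, mul_div_assoc]

theorem hedge_regret_le [Fintype ι] [Nonempty ι] (hη : 0 < η)
    (hr : ∀ t j, r t j ∈ Set.Icc (0 : ℝ) 1) (hw0 : ∀ j, w 0 j = 1)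
    (hwrec : ∀ t j, w (t + 1) j = w t j * exp (η * r t j)) (n : ℕ) (j : ι) :
    (∑ t ∈ range n, r t j) - ∑ t ∈ range n, (∑ j', w t j' * r t j') / (∑ j', w t j') ≤
      log (Fintype.card ι) / η + n * η / 2 := by
  have hj : exp (η * ∑ t ∈ range n, r t j) ≤ ∑ j', w n j' := by
    rw [← hedge_weight_eq hw0 hwrec]
    exact single_le_sum (fun j' _ => (hedge_weight_eq hw0 hwrec n j').symm ▸ (exp_pos _).le)
      (mem_univ j)
  have hlog : η * ∑ t ∈ range n, r t j ≤ log (Fintype.card ι) +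
      (η * ∑ t ∈ range n, (∑ j', w t j' * r t j') / (∑ j', w t j') + n * η ^ 2 / 2) := by
    rw [← exp_le_exp, exp_add, exp_log (Nat.cast_pos.2 Fintype.card_pos)]
    exact hj.trans (hedge_potential_le hr hw0 hwrec n)
  calc _ = (η * ∑ t ∈ range n, r t j -
        η * ∑ t ∈ range n, (∑ j', w t j' * r t j') / (∑ j', w t j')) / η := by
        field_simp
    _ ≤ (log (Fintype.card ι) + n * η ^ 2 / 2) / η := by gcongr; linarith
    _ = log (Fintype.card ι) / η + n * η / 2 := by field_simp

end Hedge

theorem hedge_regret_bound_general (K T : ℕ) (hT : 1 ≤ T)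
    (r : ℕ → Fin K → ℝ)
    (hr : ∀ t j, r t j ∈ Set.Icc (0 : ℝ) 1)
    (η : ℝ) (hη : η = Real.sqrt (2 * Real.log K / T))
    (w : ℕ → Fin K → ℝ)
    (hw0 : ∀ j, w 0 j = 1)
    (hwrec : ∀ t j, w (t + 1) j = w t j * Real.exp (η * r t j)) :
    ∀ j : Fin K,
      (∑ t ∈ Finset.range T, r t j) -
        (∑ t ∈ Finset.range T, (∑ j', w t j' * r t j') / (∑ j', w t j')) ≤
      Real.sqrt (2 * T * Real.log K) := by
  intro j
  have : Nonempty (Fin K) := ⟨j⟩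
  rcases (show 1 ≤ K from j.pos).eq_or_lt with rfl | hK
  · have hmix t : (∑ j', w t j' * r t j') / ∑ j', w t j' = r t j := by
      have hpos : w t 0 ≠ 0 := by rw [hedge_weight_eq hw0 hwrec]; exact (exp_pos _).ne'
      simp [Subsingleton.elim j 0, hpos]
    simp only [hmix, sub_self]
    exact sqrt_nonneg _
  · have hL : 0 < log K := log_pos (by exact_mod_cast hK)
    have hT : (0 : ℝ) < T := by exact_mod_cast hT
    have hηpos : 0 < η := hη ▸ sqrt_pos.2 (by positivity)
    calc _ ≤ log K / η + T * η / 2 := by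
          simpa using hedge_regret_le hηpos hr hw0 hwrec T j
      _ = √(2 * T * log K) := by rw [hη]; exact div_sqrt_add_mul_sqrt_div_two hL hT

/-- Hedge regret bound. With `K` experts, `T` rounds, rewards in
`[0,1]`, uniform initial weights, exponential-weight updates
`w_{t+1} j = w_t j * exp (η * r t j)` with `η = √(2 log K / T)`, and the
learner's expected reward at round `t` being the weight-mixture
`(∑ j, w_t j * r t j) / (∑ j, w_t j)`, the cumulative regret against every
fixed expert is at most `√(2 T log K)`. -/
theorem hedge_regret_bound (K T : ℕ) (hK : 1 ≤ K) (hT : 1 ≤ T)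
    (r : ℕ → Fin K → ℝ)
    (hr : ∀ t j, r t j ∈ Set.Icc (0 : ℝ) 1)
    (η : ℝ) (hη : η = Real.sqrt (2 * Real.log K / T))
    (w : ℕ → Fin K → ℝ)
    (hw0 : ∀ j, w 0 j = 1)
    (hwrec : ∀ t j, w (t + 1) j = w t j * Real.exp (η * r t j)) :
    ∀ j : Fin K,
      (∑ t ∈ Finset.range T, r t j) -
        (∑ t ∈ Finset.range T, (∑ j', w t j' * r t j') / (∑ j', w t j')) ≤
      Real.sqrt (2 * T * Real.log K) :=
  hedge_regret_bound_general K T hT r hr η hη w hw0 hwrec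
end

section
/- Greedy selection under a cardinality constraint for a monotone submodular set function F with F(∅) = 0 achieves F(S_greedy) ≥ (1 − 1/e)·max_{|S|≤k} F(S). -/
open Finset

/-!
By monotonicity and submodularity, the gap `F S - F B` between a set `S` with `#S ≤ k` and the current greedy set
`B` is at most the sum of the `#S` marginal gains of the elements of `S` at `B`, hence at most
`k` times the greedy gain. Each greedy step therefore shrinks the gap by the factor `1 - 1/k`,
and after `k` steps it is at most `(1 - 1/k)^k F S ≤ F S / e`.
-/

section

variable {M : Type*} [DecidableEq M]

def IsSubmodular (F : Finset M → ℝ) : Prop :=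
  ∀ (S T : Finset M) (x : M), S ⊆ T → x ∉ T →
    F (insert x T) - F T ≤ F (insert x S) - F S

namespace IsSubmodular

variable {F : Finset M → ℝ}

theorem sub_le_sum_marginal (hF : IsSubmodular F) (B A : Finset M) :
    F (B ∪ A) - F B ≤ ∑ x ∈ A, (F (insert x B) - F B) := by
  induction A using Finset.induction_on with
  | empty => simp
  | @insert a A ha ih =>
    rw [sum_insert ha, union_insert]
    by_cases haB : a ∈ B
    · rw [insert_eq_of_mem (mem_union_left A haB), insert_eq_of_mem haB]
      linarith
    · have := hF B (B ∪ A) a subset_union_left (by simp [haB, ha])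
      linarith

theorem sub_le_card_mul_greedy_gain (hF : IsSubmodular F) (hmono : Monotone F)
    {B : Finset M} {x : M} (hx : ∀ y, F (insert y B) ≤ F (insert x B)) (S : Finset M) :
    F S - F B ≤ #S * (F (insert x B) - F B) :=
  calc F S - F B ≤ F (B ∪ S) - F B := by gcongr; exact hmono subset_union_right
    _ ≤ ∑ y ∈ S, (F (insert y B) - F B) := hF.sub_le_sum_marginal B S
    _ ≤ ∑ _y ∈ S, (F (insert x B) - F B) := sum_le_sum fun y _ => by linarith [hx y]
    _ = #S * (F (insert x B) - F B) := by rw [sum_const, nsmul_eq_mul]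

theorem gap_greedy_step_le (hF : IsSubmodular F) (hmono : Monotone F)
    {B : Finset M} {x : M} (hx : ∀ y, F (insert y B) ≤ F (insert x B))
    {S : Finset M} {k : ℕ} (hk : 0 < k) (hS : #S ≤ k) :
    F S - F (insert x B) ≤ (1 - 1 / k) * (F S - F B) := by
  have hgain : 0 ≤ F (insert x B) - F B := sub_nonneg.2 (hmono (subset_insert x B))
  have hk' : (0 : ℝ) < k := by exact_mod_cast hk
  have hgap : F S - F B ≤ k * (F (insert x B) - F B) :=
    (hF.sub_le_card_mul_greedy_gain hmono hx S).trans
      (mul_le_mul_of_nonneg_right (by exact_mod_cast hS) hgain)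
  have : (F S - F B) / k ≤ F (insert x B) - F B := by rwa [div_le_iff₀' hk']
  rw [sub_mul, one_mul, one_div_mul_eq_div]
  linarith

end IsSubmodular

end

theorem greedy_submodular_approx_general {M : Type*} [DecidableEq M]
    (F : Finset M → ℝ)
    (hmono : ∀ S T : Finset M, S ⊆ T → F S ≤ F T)
    (hsubmod : ∀ (S T : Finset M) (x : M), S ⊆ T → x ∉ T →
      F (insert x T) - F T ≤ F (insert x S) - F S)
    (hempty : F ∅ = 0)
    (k : ℕ) (g : ℕ → Finset M)
    (hg0 : g 0 = ∅)
    (hgreedy : ∀ i < k, ∃ x : M,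
      g (i + 1) = insert x (g i) ∧
      ∀ y : M, F (insert y (g i)) ≤ F (insert x (g i))) :
    ∀ S : Finset M, S.card ≤ k →
      (1 - 1 / Real.exp 1) * F S ≤ F (g k) := by
  intro S hS
  rcases Nat.eq_zero_or_pos k with rfl | hk
  · simp [card_eq_zero.mp (Nat.le_zero.mp hS), hempty, hg0]
  have hsubmod : IsSubmodular F := hsubmod
  have hmono' : Monotone F := fun _ _ h => hmono _ _ h
  have hFS : 0 ≤ F S := hempty ▸ hmono ∅ S (empty_subset S)
  have hc : (0 : ℝ) ≤ 1 - 1 / k :=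
    sub_nonneg.2 (div_le_one_of_le₀ (by exact_mod_cast hk) k.cast_nonneg)
  have hgap : F S - F (g k) ≤ (1 - 1 / k) ^ k * (F S - F (g 0)) :=
    le_geom (u := fun i => F S - F (g i)) hc k fun i hi => by
      obtain ⟨x, hgx, hx⟩ := hgreedy i hi
      rw [hgx]
      exact hsubmod.gap_greedy_step_le hmono' hx hk hS
  have hpow : (1 - 1 / (k : ℝ)) ^ k ≤ 1 / Real.exp 1 := by
    simpa [Real.exp_neg] using Real.one_sub_div_pow_le_exp_neg (t := 1) (by exact_mod_cast hk)
  rw [hg0, hempty, sub_zero] at hgap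
  nlinarith

/-- Greedy selection for a monotone submodular set function `F`
with `F ∅ = 0` under a cardinality constraint `k` achieves a `(1 − 1/e)`
approximation: `F (greedy after k steps) ≥ (1 − 1/e) · F S` for every `S` with
`|S| ≤ k`. -/
theorem greedy_submodular_approx {M : Type*} [Fintype M] [DecidableEq M]
    (F : Finset M → ℝ)
    (hmono : ∀ S T : Finset M, S ⊆ T → F S ≤ F T)
    (hsubmod : ∀ (S T : Finset M) (x : M), S ⊆ T → x ∉ T →
      F (insert x T) - F T ≤ F (insert x S) - F S)
    (hempty : F ∅ = 0)
    (k : ℕ) (g : ℕ → Finset M)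
    (hg0 : g 0 = ∅)
    (hgreedy : ∀ i < k, ∃ x : M,
      g (i + 1) = insert x (g i) ∧
      ∀ y : M, F (insert y (g i)) ≤ F (insert x (g i))) :
    ∀ S : Finset M, S.card ≤ k →
      (1 - 1 / Real.exp 1) * F S ≤ F (g k) :=
  greedy_submodular_approx_general F hmono hsubmod hempty k g hg0 hgreedy
end
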